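/- arXiv:math/0410177 — 4 statements merged into one kernel-verified Lean document; each statement's English description precedes it below -/
import Mathlib

section
/- For all real α > 0 and all integers n ≥ 3 and 1 ≤ i ≤ n, one has |((ln i)/(ln n))^α − 1| ≤ ((2 ∨ α)/(ln n)) · |ln(i/n)|. -/
/-!
Put `x = log i / log n ∈ [0, 1]`, so that `x - 1 = log (i / n) / log n`. On `[0, 1]` the map
`x ↦ x ^ α` is Lipschitz at `1` with constant `max 1 α`: for `α ≤ 1` because `x ≤ x ^ α`, and for
`α ≥ 1` by Bernoulli's inequality `1 + α (x - 1) ≤ x ^ α`.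
-/

namespace Real

lemma one_sub_rpow_le_max_one_mul {x α : ℝ} (hx₀ : 0 ≤ x) (hx₁ : x ≤ 1) :
    1 - x ^ α ≤ max 1 α * (1 - x) := by
  rcases le_total α 1 with hα | hα
  · have hx_le : x ≤ x ^ α := self_le_rpow_of_le_one hx₀ hx₁ hα
    have hmax : 1 - x ≤ max 1 α * (1 - x) :=
      le_mul_of_one_le_left (by linarith) (le_max_left _ _)
    linarith
  · have bernoulli := one_add_mul_self_le_rpow_one_add (by linarith : (-1 : ℝ) ≤ x - 1) hα
    rw [add_sub_cancel] at bernoulli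
    have hmax : α * (1 - x) ≤ max 1 α * (1 - x) :=
      mul_le_mul_of_nonneg_right (le_max_right _ _) (by linarith)
    linarith

lemma abs_rpow_sub_one_le_max_one_mul {x α : ℝ} (hα : 0 ≤ α) (hx₀ : 0 ≤ x) (hx₁ : x ≤ 1) :
    |x ^ α - 1| ≤ max 1 α * |x - 1| := by
  rw [abs_of_nonpos (by linarith [rpow_le_one hx₀ hx₁ hα]), abs_of_nonpos (by linarith)]
  linarith [one_sub_rpow_le_max_one_mul (α := α) hx₀ hx₁]

end Real

open Real

theorem stmt0 (α : ℝ) (hα : 0 < α) (n i : ℕ) (hn : 3 ≤ n) (hi1 : 1 ≤ i) (hin : i ≤ n) :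
    |(Real.log i / Real.log n) ^ α - 1| ≤
      (max 2 α / Real.log n) * |Real.log ((i : ℝ) / n)| := by
  have hi₀ : (0 : ℝ) < i := by exact_mod_cast hi1
  have hlog_n : 0 < log n := log_pos (by exact_mod_cast (by omega : 1 < n))
  have hlog_i : 0 ≤ log i := log_nonneg (by exact_mod_cast hi1)
  have hlog_le : log i ≤ log n := log_le_log hi₀ (by exact_mod_cast hin)
  have hx_sub_one : log i / log n - 1 = log ((i : ℝ) / n) / log n := by
    rw [log_div hi₀.ne' (by positivity), sub_div, div_self hlog_n.ne']
  calc |(log i / log n) ^ α - 1|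
      ≤ max 1 α * |log i / log n - 1| :=
        abs_rpow_sub_one_le_max_one_mul hα.le (by positivity) ((div_le_one hlog_n).2 hlog_le)
    _ = max 1 α / log n * |log ((i : ℝ) / n)| := by
        rw [hx_sub_one, abs_div, abs_of_pos hlog_n]
        ring
    _ ≤ max 2 α / log n * |log ((i : ℝ) / n)| := by
        gcongr
        norm_num
end

section
/- Let (I_n) be random variables with I_n ∈ {0,…,n}, P(I_n = n) < 1 for all sufficiently large n, and limsup_{n→∞} E ln((I_n ∨ 1)/n) < −ε for some ε > 0. Let γ > 0 and let (d_n)_{n≥0}, (r_n)_{n≥n₀} be nonnegative sequences satisfying d_n ≤ E[ (L_δ(I_n)/L_δ(n))^γ · d_{I_n} ] + r_n for all n ≥ n₀ ≥ 2. Then for every β with 1 < β < 1 + γ there exists δ > 0 such that: if r_n = O(1/(ln n)^β) then d_n = O(1/(ln n)^{β−1}). -/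
open MeasureTheory ProbabilityTheory Filter Asymptotics

/-- `L_δ(n) = ln(n ∨ 1) + δ·1_{n ∈ {0,1}}`. -/
noncomputable def Ldelta (δ : ℝ) (n : ℕ) : ℝ :=
  Real.log (max n 1) + if n ≤ 1 then δ else 0

/-! We show `d_n ≤ C / L_δ(n)^(β-1)` by strong induction, with `δ = ε/2`, so that eventually
`E L_δ(I_n) ≤ L_δ(n) - ε/2`. Put `B = C / L_δ(n)^(β-1)`, `m = min 1 (γ-β+1)` and
`M = max d_n B`. By the induction hypothesis and the concavity bound
`x^(γ-β+1) ≤ 1 - m + m x` on `[0, 1]`, the summand at `I_n = k` is at most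
`M (1 - m + m L_δ(k)/L_δ(n))` for every `k ≤ n` (for `k = n` because `d_n ≤ M`), so the
recursion gives `d_n ≤ M (1 - t) + B t` with `t = m ε / (2 L_δ(n))` once `C` is large enough
to absorb `r_n = O(B t)`. This forces `d_n ≤ B`. -/

lemma rpow_le_one_sub_add_mul {x p m : ℝ} (hx0 : 0 ≤ x) (hx1 : x ≤ 1) (hm0 : 0 < m)
    (hm1 : m ≤ 1) (hmp : m ≤ p) : x ^ p ≤ 1 - m + m * x := by
  have hconc : x ^ m ≤ 1 - m + m * x := by
    have h := rpow_one_add_le_one_add_mul_self (s := x - 1) (by linarith) hm0.le hm1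
    rw [add_sub_cancel] at h
    linarith
  rcases hx0.eq_or_lt with rfl | hxpos
  · rw [Real.zero_rpow (hm0.trans_le hmp).ne']
    linarith
  · exact (Real.rpow_le_rpow_of_exponent_ge hxpos hx1 hmp).trans hconc

lemma div_rpow_mul_le {a b d C s γ m : ℝ} (ha : 0 < a) (hab : a ≤ b) (hC : 0 ≤ C)
    (hm0 : 0 < m) (hm1 : m ≤ 1) (hmγ : m ≤ γ - s) (hd : d ≤ C / a ^ s) :
    (a / b) ^ γ * d ≤ C / b ^ s * (1 - m + m * (a / b)) := by
  have hb : 0 < b := ha.trans_le hab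
  have hsplit : (a / b) ^ γ * (C / a ^ s) = C / b ^ s * (a / b) ^ (γ - s) := by
    rw [Real.div_rpow ha.le hb.le, Real.div_rpow ha.le hb.le, Real.rpow_sub ha, Real.rpow_sub hb]
    field_simp
  calc (a / b) ^ γ * d ≤ (a / b) ^ γ * (C / a ^ s) := by gcongr
    _ = C / b ^ s * (a / b) ^ (γ - s) := hsplit
    _ ≤ C / b ^ s * (1 - m + m * (a / b)) := by
      gcongr
      exact rpow_le_one_sub_add_mul (by positivity) ((div_le_one hb).2 hab) hm0 hm1 hmγ

lemma le_of_le_max_mul_one_sub_add_mul {x B t : ℝ} (ht : 0 < t)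
    (h : x ≤ max x B * (1 - t) + B * t) : x ≤ B := by
  by_contra! hBx
  rw [max_eq_left hBx.le] at h
  nlinarith

lemma integrable_comp_of_le {Ω : Type*} [MeasurableSpace Ω] {μ : Measure Ω}
    [IsFiniteMeasure μ] {X : Ω → ℕ} (hX : Measurable X) {n : ℕ} (hXn : ∀ ω, X ω ≤ n)
    (g : ℕ → ℝ) : Integrable (fun ω => g (X ω)) μ := by
  refine Integrable.of_bound (Measurable.of_discrete.comp hX).aestronglyMeasurable
    (∑ k ∈ Finset.range (n + 1), |g k|) (ae_of_all _ fun ω => ?_)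
  exact Finset.single_le_sum (f := fun k => |g k|) (fun k _ => abs_nonneg (g k))
    (Finset.mem_range_succ_iff.2 (hXn ω))

lemma le_div_rpow_of_recursion_step {Ω : Type*} [MeasurableSpace Ω] {μ : Measure Ω}
    [IsProbabilityMeasure μ] {X : Ω → ℕ} (hX : Measurable X) {n : ℕ} (hXn : ∀ ω, X ω ≤ n)
    {L d : ℕ → ℝ} (hL : ∀ k, 0 < L k) (hLn : ∀ k ≤ n, L k ≤ L n)
    {η m s γ C K r : ℝ} (hη : 0 < η) (hm0 : 0 < m) (hm1 : m ≤ 1) (hmγ : m ≤ γ - s)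
    (hC : 0 ≤ C) (hEL : ∫ ω, L (X ω) ∂μ ≤ L n - η)
    (hprev : ∀ k < n, d k ≤ C / L k ^ s)
    (hrec : d n ≤ ∫ ω, (L (X ω) / L n) ^ γ * d (X ω) ∂μ + r)
    (hK : K ≤ C * (m * η)) (hr : r ≤ K / L n ^ s / L n) :
    d n ≤ C / L n ^ s := by
  set B := C / L n ^ s
  set M := max (d n) B
  have hLn0 := hL n
  have hpt : ∀ k ≤ n, (L k / L n) ^ γ * d k ≤ M * (1 - m) + M * m / L n * L k := by
    intro k hk
    rcases hk.lt_or_eq with hk | rfl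
    · have hx : 0 ≤ 1 - m + m * (L k / L n) := by
        have : 0 ≤ L k / L n := (div_pos (hL k) hLn0).le
        nlinarith
      calc (L k / L n) ^ γ * d k ≤ B * (1 - m + m * (L k / L n)) :=
            div_rpow_mul_le (hL k) (hLn k hk.le) hC hm0 hm1 hmγ (hprev k hk)
        _ ≤ M * (1 - m + m * (L k / L n)) := by gcongr; exact le_max_right _ _
        _ = M * (1 - m) + M * m / L n * L k := by ring
    · rw [div_self hLn0.ne', Real.one_rpow, one_mul]
      field_simp
      nlinarith [le_max_left (d k) B]
  have hint := integrable_comp_of_le (μ := μ) hX hXn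
  have hE : ∫ ω, (L (X ω) / L n) ^ γ * d (X ω) ∂μ ≤ M * (1 - m * η / L n) :=
    calc ∫ ω, (L (X ω) / L n) ^ γ * d (X ω) ∂μ
        ≤ ∫ ω, (M * (1 - m) + M * m / L n * L (X ω)) ∂μ :=
          integral_mono (hint fun k => (L k / L n) ^ γ * d k)
            (hint fun k => M * (1 - m) + M * m / L n * L k) fun ω => hpt _ (hXn ω)
      _ = M * (1 - m) + M * m / L n * ∫ ω, L (X ω) ∂μ := by
          rw [integral_add (integrable_const _) ((hint L).const_mul _), integral_const,
            integral_const_mul, probReal_univ, one_smul]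
      _ ≤ M * (1 - m) + M * m / L n * (L n - η) := by gcongr
      _ = M * (1 - m * η / L n) := by field_simp; ring
  have hrB : r ≤ B * (m * η / L n) :=
    calc r ≤ K / L n ^ s / L n := hr
      _ ≤ C * (m * η) / L n ^ s / L n := by gcongr
      _ = B * (m * η / L n) := by ring
  exact le_of_le_max_mul_one_sub_add_mul (t := m * η / L n) (by positivity) (by linarith)

lemma exists_forall_le_div_of_step {d w : ℕ → ℝ} (hw : ∀ k, 0 < w k) {N : ℕ} {C₀ : ℝ}
    (hstep : ∀ C ≥ C₀, ∀ n ≥ N, (∀ k < n, d k ≤ C / w k) → d n ≤ C / w n) :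
    ∃ C, ∀ n, d n ≤ C / w n := by
  set C := max C₀ (∑ k ∈ Finset.range N, |d k| * w k)
  refine ⟨C, fun n => ?_⟩
  induction n using Nat.strong_induction_on with
  | _ n ih =>
    rcases lt_or_ge n N with hn | hn
    · rw [le_div_iff₀ (hw n)]
      calc d n * w n ≤ |d n| * w n := mul_le_mul_of_nonneg_right (le_abs_self _) (hw n).le
        _ ≤ ∑ k ∈ Finset.range N, |d k| * w k :=
          Finset.single_le_sum (f := fun k => |d k| * w k)
            (fun k _ => mul_nonneg (abs_nonneg _) (hw k).le) (Finset.mem_range.2 hn)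
        _ ≤ C := le_max_right _ _
    · exact hstep C (le_max_left _ _) n hn ih

section Ldelta

variable {δ : ℝ}

lemma Ldelta_of_le_one {n : ℕ} (hn : n ≤ 1) : Ldelta δ n = δ := by
  simp [Ldelta, hn]

lemma Ldelta_of_two_le {n : ℕ} (hn : 2 ≤ n) : Ldelta δ n = Real.log n := by
  have : max (n : ℝ) 1 = n := max_eq_left (by exact_mod_cast (by omega : 1 ≤ n))
  simp [Ldelta, this, show ¬ n ≤ 1 by omega]

lemma Ldelta_pos (hδ : 0 < δ) (n : ℕ) : 0 < Ldelta δ n := by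
  rcases le_or_gt n 1 with hn | hn
  · rwa [Ldelta_of_le_one hn]
  · rw [Ldelta_of_two_le hn]
    exact Real.log_pos (by exact_mod_cast hn)

lemma Ldelta_le_Ldelta {k n : ℕ} (hkn : k ≤ n) (hδ : δ ≤ Real.log n) :
    Ldelta δ k ≤ Ldelta δ n := by
  rcases le_or_gt n 1 with hn | hn
  · rw [Ldelta_of_le_one hn, Ldelta_of_le_one (hkn.trans hn)]
  rw [Ldelta_of_two_le hn]
  rcases le_or_gt k 1 with hk | hk
  · rwa [Ldelta_of_le_one hk]
  · rw [Ldelta_of_two_le hk]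
    exact Real.log_le_log (by exact_mod_cast (by omega : 0 < k)) (by exact_mod_cast hkn)

lemma eventually_forall_Ldelta_le (δ : ℝ) :
    ∀ᶠ n : ℕ in atTop, ∀ k ≤ n, Ldelta δ k ≤ Ldelta δ n := by
  filter_upwards [(Real.tendsto_log_atTop.comp tendsto_natCast_atTop_atTop).eventually_ge_atTop δ]
    with n hn k hk using Ldelta_le_Ldelta hk hn

lemma Ldelta_le_log_max_add (hδ : 0 ≤ δ) (n : ℕ) : Ldelta δ n ≤ Real.log (max n 1) + δ := by
  unfold Ldelta
  split_ifs <;> linarith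

lemma _root_.Asymptotics.IsBigO.exists_eventually_le_div_Ldelta {r : ℕ → ℝ} {β : ℝ}
    (h : r =O[atTop] fun n => 1 / Real.log n ^ β) :
    ∃ c, 0 ≤ c ∧ ∀ᶠ n in atTop, r n ≤ c / Ldelta δ n ^ (β - 1) / Ldelta δ n := by
  obtain ⟨c, hc, hcr⟩ := h.exists_pos
  refine ⟨c, hc.le, ?_⟩
  filter_upwards [hcr.bound, eventually_ge_atTop 2] with n hn hn2
  have hpos : 0 < Real.log n := Real.log_pos (by exact_mod_cast hn2)
  rw [Real.norm_eq_abs, Real.norm_of_nonneg (by positivity)] at hn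
  calc r n ≤ c * (1 / Real.log n ^ β) := (le_abs_self _).trans hn
    _ = c / Ldelta δ n ^ (β - 1) / Ldelta δ n := by
      rw [Ldelta_of_two_le hn2, Real.rpow_sub hpos, Real.rpow_one]
      field_simp

end Ldelta

section LogRatio

variable {Ω : Type*} [MeasurableSpace Ω] {μ : Measure Ω}

lemma integral_log_max_div_nonpos {X : Ω → ℕ} {n : ℕ} (hXn : ∀ ω, X ω ≤ n) :
    ∫ ω, Real.log ((max (X ω) 1 : ℝ) / n) ∂μ ≤ 0 := by
  refine integral_nonpos fun ω => ?_
  rcases n.eq_zero_or_pos with rfl | hn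
  · simp
  · have hn1 : (1 : ℝ) ≤ n := by exact_mod_cast hn
    refine Real.log_nonpos (by positivity) ((div_le_one (by linarith)).2 ?_)
    exact max_le (by exact_mod_cast hXn ω) hn1

variable [IsProbabilityMeasure μ]

lemma integral_Ldelta_le {X : Ω → ℕ} {n : ℕ} (hX : Measurable X) (hXn : ∀ ω, X ω ≤ n)
    (hn : 1 ≤ n) {δ : ℝ} (hδ : 0 ≤ δ) :
    ∫ ω, Ldelta δ (X ω) ∂μ ≤ ∫ ω, Real.log ((max (X ω) 1 : ℝ) / n) ∂μ + Real.log n + δ := by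
  have hint := integrable_comp_of_le (μ := μ) hX hXn
  have hlog : ∀ ω, Real.log ((max (X ω) 1 : ℝ) / n) = Real.log (max (X ω) 1) - Real.log n :=
    fun ω => Real.log_div (by positivity) (by positivity)
  calc ∫ ω, Ldelta δ (X ω) ∂μ ≤ ∫ ω, (Real.log (max (X ω) 1 : ℝ) + δ) ∂μ :=
        integral_mono (hint _) (hint fun k => Real.log (max k 1 : ℝ) + δ)
          fun ω => Ldelta_le_log_max_add hδ _
    _ = ∫ ω, Real.log ((max (X ω) 1 : ℝ) / n) ∂μ + Real.log n + δ := by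
        simp only [hlog]
        rw [integral_add (hint fun k => Real.log (max k 1 : ℝ)) (integrable_const _),
          integral_sub (hint fun k => Real.log (max k 1 : ℝ)) (integrable_const _)]
        simp

lemma eventually_integral_Ldelta_le {I : ℕ → Ω → ℕ} (hmeas : ∀ n, Measurable (I n))
    (hle : ∀ n ω, I n ω ≤ n) {ε δ : ℝ} (hδ : 0 ≤ δ)
    (hlimsup : limsup (fun n => ∫ ω, Real.log ((max (I n ω) 1 : ℝ) / n) ∂μ) atTop < -ε) :
    ∀ᶠ n in atTop, ∫ ω, Ldelta δ (I n ω) ∂μ ≤ Ldelta δ n - (ε - δ) := by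
  have hbdd : IsBoundedUnder (· ≤ ·) atTop
      fun n => ∫ ω, Real.log ((max (I n ω) 1 : ℝ) / n) ∂μ :=
    isBoundedUnder_of ⟨0, fun n => integral_log_max_div_nonpos (hle n)⟩
  filter_upwards [eventually_lt_of_limsup_lt hlimsup hbdd, eventually_ge_atTop 2] with n hn hn2
  have := integral_Ldelta_le (μ := μ) (hmeas n) (hle n) (by omega) hδ
  rw [Ldelta_of_two_le hn2]
  linarith

end LogRatio

theorem stmt9_general {Ω : Type*} [MeasureSpace Ω] [IsProbabilityMeasure (ℙ : Measure Ω)]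
    (I : ℕ → Ω → ℕ) (hmeas : ∀ n, Measurable (I n)) (hle : ∀ n ω, I n ω ≤ n)
    (ε : ℝ) (hε : 0 < ε)
    (hlimsup : limsup (fun n => ∫ ω, Real.log ((max (I n ω) 1 : ℝ) / n)) atTop < -ε)
    (γ : ℝ) (n₀ : ℕ)
    (d r : ℕ → ℝ) (hd : ∀ n, 0 ≤ d n) :
    ∀ β : ℝ, 1 < β → β < 1 + γ → ∃ δ : ℝ, 0 < δ ∧
      ((∀ n, n₀ ≤ n →
          d n ≤ (∫ ω, (Ldelta δ (I n ω) / Ldelta δ n) ^ γ * d (I n ω)) + r n) →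
        (r =O[atTop] fun n => 1 / Real.log n ^ β) →
        (d =O[atTop] fun n => 1 / Real.log n ^ (β - 1))) := by
  intro β hβ1 hβ2
  have hδ : 0 < ε / 2 := half_pos hε
  refine ⟨ε / 2, hδ, fun hrec hrO => ?_⟩
  have hη : 0 < ε - ε / 2 := by linarith
  set m := min 1 (γ - (β - 1))
  have hm0 : 0 < m := lt_min one_pos (by linarith)
  obtain ⟨c, hc0, hc⟩ := hrO.exists_eventually_le_div_Ldelta (δ := ε / 2)
  obtain ⟨N, hN⟩ := eventually_atTop.1
    ((eventually_integral_Ldelta_le hmeas hle hδ.le hlimsup).and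
      ((eventually_forall_Ldelta_le _).and (hc.and (eventually_ge_atTop n₀))))
  obtain ⟨C, hC⟩ := exists_forall_le_div_of_step (d := d)
    (fun n => Real.rpow_pos_of_pos (Ldelta_pos hδ n) (β - 1)) (N := N)
    (C₀ := c / (m * (ε - ε / 2))) fun C hC n hn hprev => by
      obtain ⟨hEL, hLn, hrn, hn₀⟩ := hN n hn
      exact le_div_rpow_of_recursion_step (hmeas n) (hle n) (Ldelta_pos hδ) hLn hη hm0
        (min_le_left _ _) (min_le_right _ _) ((div_nonneg hc0 (by positivity)).trans hC) hEL hprev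
        (hrec n hn₀) ((div_le_iff₀ (by positivity)).1 hC) hrn
  refine IsBigO.of_bound C ?_
  filter_upwards [eventually_ge_atTop 2] with n hn
  rw [Real.norm_of_nonneg (hd n), Real.norm_of_nonneg (by positivity), ← div_eq_mul_one_div,
    ← Ldelta_of_two_le (δ := ε / 2) hn]
  exact hC n

theorem stmt9 {Ω : Type*} [MeasureSpace Ω] [IsProbabilityMeasure (ℙ : Measure Ω)]
    (I : ℕ → Ω → ℕ) (hmeas : ∀ n, Measurable (I n)) (hle : ∀ n ω, I n ω ≤ n)
    (hPn : ∀ᶠ n in atTop, ℙ {ω | I n ω = n} < 1)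
    (ε : ℝ) (hε : 0 < ε)
    (hlimsup : limsup (fun n => ∫ ω, Real.log ((max (I n ω) 1 : ℝ) / n)) atTop < -ε)
    (γ : ℝ) (hγ : 0 < γ) (n₀ : ℕ) (hn₀ : 2 ≤ n₀)
    (d r : ℕ → ℝ) (hd : ∀ n, 0 ≤ d n) (hr : ∀ n, 0 ≤ r n) :
    ∀ β : ℝ, 1 < β → β < 1 + γ → ∃ δ : ℝ, 0 < δ ∧
      ((∀ n, n₀ ≤ n →
          d n ≤ (∫ ω, (Ldelta δ (I n ω) / Ldelta δ n) ^ γ * d (I n ω)) + r n) →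
        (r =O[atTop] fun n => 1 / Real.log n ^ β) →
        (d =O[atTop] fun n => 1 / Real.log n ^ (β - 1))) :=
  stmt9_general I hmeas hle ε hε hlimsup γ n₀ d r hd
end

section
/- Let η > 0, ε > 0, δ ≤ ε(η∧1)/(2(2η + (η∧1))), and let Z be a real random variable with Z ≤ 0 almost surely and E Z ≤ −ε. Then for all n large enough that 1 + (Z + δ)/ln n ≥ 0 a.s. and (1 + δ/ln n)^η ≤ 1 + 2ηδ/ln n, one has E[(1 + (Z + δ)/ln n)^η] ≤ 1 − (η∧1)ε/(2 ln n). -/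
/-!
Write `Y = (Z + δ) / log n` and `m = η ∧ 1`. Pointwise, `(1 + Y)^η ≤ (1 + δ / log n)^η + m Y`:
on `{Z > -δ}` the base is at most `1 + δ / log n`, while on `{Z ≤ -δ}` it lies in `[0, 1]`, so
lowering the exponent to `m` and Bernoulli's inequality give `(1 + Y)^η ≤ (1 + Y)^m ≤ 1 + m Y`.
Taking expectations, `E Y ≤ (δ - ε) / log n`, and the bound on `δ` absorbs the error terms.
-/

open MeasureTheory ProbabilityTheory

theorem rpow_one_add_le_rpow_one_add_add_mul {y b η m : ℝ} (hy : 0 ≤ 1 + y) (hyb : y ≤ b)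
    (hb : 0 ≤ b) (hm0 : 0 ≤ m) (hm1 : m ≤ 1) (hmη : m ≤ η) :
    (1 + y) ^ η ≤ (1 + b) ^ η + m * y := by
  have hη : 0 ≤ η := hm0.trans hmη
  rcases le_total 0 y with hy0 | hy0
  · calc (1 + y) ^ η ≤ (1 + b) ^ η := by gcongr
      _ ≤ (1 + b) ^ η + m * y := le_add_of_nonneg_right (mul_nonneg hm0 hy0)
  · calc (1 + y) ^ η ≤ (1 + y) ^ m :=
          Real.rpow_le_rpow_of_exponent_ge' hy (by linarith) hm0 hmη
      _ ≤ 1 + m * y := rpow_one_add_le_one_add_mul_self (by linarith) hm0 hm1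
      _ ≤ (1 + b) ^ η + m * y := by
          gcongr
          exact Real.one_le_rpow (by linarith) hη

theorem integral_rpow_one_add_le {Ω : Type*} [MeasurableSpace Ω] {μ : Measure Ω}
    [IsProbabilityMeasure μ] {Y : Ω → ℝ} {b η m : ℝ} (hY : Integrable Y μ)
    (hpos : ∀ᵐ ω ∂μ, 0 ≤ 1 + Y ω) (hYb : ∀ᵐ ω ∂μ, Y ω ≤ b) (hb : 0 ≤ b)
    (hm0 : 0 ≤ m) (hm1 : m ≤ 1) (hmη : m ≤ η) :
    ∫ ω, (1 + Y ω) ^ η ∂μ ≤ (1 + b) ^ η + m * ∫ ω, Y ω ∂μ := by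
  have hη : 0 ≤ η := hm0.trans hmη
  have hmeas : AEStronglyMeasurable (fun ω => (1 + Y ω) ^ η) μ :=
    ((measurable_const.add measurable_id).pow_const η).comp_aemeasurable
      hY.aemeasurable |>.aestronglyMeasurable
  have hint : Integrable (fun ω => (1 + Y ω) ^ η) μ := by
    refine (integrable_const ((1 + b) ^ η)).mono' hmeas ?_
    filter_upwards [hpos, hYb] with ω hω hωb
    rw [Real.norm_of_nonneg (Real.rpow_nonneg hω η)]
    gcongr
  calc ∫ ω, (1 + Y ω) ^ η ∂μ ≤ ∫ ω, (1 + b) ^ η + m * Y ω ∂μ := by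
        refine integral_mono_ae hint ((integrable_const _).add (hY.const_mul m)) ?_
        filter_upwards [hpos, hYb] with ω hω hωb
        exact rpow_one_add_le_rpow_one_add_add_mul hω hωb hb hm0 hm1 hmη
    _ = (1 + b) ^ η + m * ∫ ω, Y ω ∂μ := by
        rw [integral_add (integrable_const _) (hY.const_mul m), integral_const_mul]
        simp

theorem stmt10_general {Ω : Type*} [MeasureSpace Ω] [IsProbabilityMeasure (ℙ : Measure Ω)]
    (η ε δ : ℝ) (hη : 0 < η) (hδ0 : 0 < δ)
    (hδ : δ ≤ ε * min η 1 / (2 * (2 * η + min η 1)))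
    (Z : Ω → ℝ) (hZint : Integrable Z ℙ)
    (hZneg : ∀ᵐ ω ∂ℙ, Z ω ≤ 0) (hZmean : ∫ ω, Z ω ≤ -ε)
    (n : ℕ) (hlog : 0 < Real.log n)
    (hpos : ∀ᵐ ω ∂ℙ, 0 ≤ 1 + (Z ω + δ) / Real.log n)
    (hbern : (1 + δ / Real.log n) ^ η ≤ 1 + 2 * η * δ / Real.log n) :
    ∫ ω, (1 + (Z ω + δ) / Real.log n) ^ η ≤ 1 - min η 1 * ε / (2 * Real.log n) := by
  set L := Real.log n
  set m := min η 1
  have hm0 : 0 < m := lt_min hη one_pos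
  have hYint : Integrable (fun ω => (Z ω + δ) / L) ℙ :=
    (hZint.add (integrable_const δ)).div_const L
  have hYb : ∀ᵐ ω ∂ℙ, (Z ω + δ) / L ≤ δ / L := by
    filter_upwards [hZneg] with ω hω
    gcongr
    linarith
  have hYmean : ∫ ω, (Z ω + δ) / L = ((∫ ω, Z ω) + δ) / L := by
    rw [integral_div, integral_add hZint (integrable_const δ)]
    simp
  have hδm : (2 * η + m) * δ ≤ ε * m / 2 := by
    rw [le_div_iff₀ (by positivity)] at hδ
    linarith
  calc ∫ ω, (1 + (Z ω + δ) / L) ^ η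
      ≤ (1 + δ / L) ^ η + m * ∫ ω, (Z ω + δ) / L :=
        integral_rpow_one_add_le hYint hpos hYb (by positivity) hm0.le (min_le_right _ _)
          (min_le_left _ _)
    _ ≤ 1 + 2 * η * δ / L + m * ((δ - ε) / L) := by
        rw [hYmean]
        gcongr
        linarith
    _ = 1 + (2 * η * δ + m * (δ - ε)) / L := by ring
    _ ≤ 1 + -(m * ε / 2) / L := by gcongr; linarith
    _ = 1 - m * ε / (2 * L) := by ring

theorem stmt10 {Ω : Type*} [MeasureSpace Ω] [IsProbabilityMeasure (ℙ : Measure Ω)]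
    (η ε δ : ℝ) (hη : 0 < η) (hε : 0 < ε) (hδ0 : 0 < δ)
    (hδ : δ ≤ ε * min η 1 / (2 * (2 * η + min η 1)))
    (Z : Ω → ℝ) (hZmeas : Measurable Z) (hZint : Integrable Z ℙ)
    (hZneg : ∀ᵐ ω ∂ℙ, Z ω ≤ 0) (hZmean : ∫ ω, Z ω ≤ -ε)
    (n : ℕ) (hlog : 0 < Real.log n)
    (hpos : ∀ᵐ ω ∂ℙ, 0 ≤ 1 + (Z ω + δ) / Real.log n)
    (hbern : (1 + δ / Real.log n) ^ η ≤ 1 + 2 * η * δ / Real.log n) :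
    ∫ ω, (1 + (Z ω + δ) / Real.log n) ^ η ≤ 1 - min η 1 * ε / (2 * Real.log n) :=
  stmt10_general η ε δ hη hδ0 hδ Z hZint hZneg hZmean n hlog hpos hbern
end

section
/- Let I_n have distribution P(I_n = 0) = 1/n and P(I_n = k) = 2k/n² for 1 ≤ k ≤ n−1 (n ≥ 2). Then E[ln((I_n ∨ 1)/n)] → E ln √U = −1/2 as n → ∞, where U ~ unif[0,1]. -/
/-!
Since `I_n < n` almost surely and the atom at `0` contributes `ln 1 = 0`, the expectation equals
`(2 / n²) ∑_{k<n} k ln k - ln n`. As `x ln x` is increasing on `[1, ∞)`, the sum lies between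
`F n - n ln n` and `F n`, where `F n = ∫₁ⁿ x ln x dx = n²/2 ln n - n²/4 + 1/4`; hence the
expectation is `-1/2 + O(ln n / n)`.
-/

open MeasureTheory ProbabilityTheory Filter Finset Real
open scoped ENNReal Topology

section DiscreteIntegral

variable {Ω α E : Type*} [MeasurableSpace Ω] [MeasurableSpace α] [MeasurableSingletonClass α]
  [NormedAddCommGroup E] [NormedSpace ℝ E] [CompleteSpace E] {μ : Measure Ω} [IsFiniteMeasure μ]

theorem integral_comp_eq_sum_of_mem_finset {X : Ω → α} (hX : Measurable X) {s : Finset α}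
    (hs : ∀ ω, X ω ∈ s) (f : α → E) :
    ∫ ω, f (X ω) ∂μ = ∑ k ∈ s, μ.real (X ⁻¹' {k}) • f k := by
  classical
  have hfiber : ∀ k, MeasurableSet (X ⁻¹' {k}) := fun k => hX (measurableSet_singleton k)
  have hsplit : (fun ω => f (X ω)) = fun ω => ∑ k ∈ s, (X ⁻¹' {k}).indicator (fun _ => f k) ω := by
    funext ω
    rw [sum_eq_single_of_mem (X ω) (hs ω) fun k _ hk =>
      Set.indicator_of_notMem (fun h => hk h.symm) _]
    simp
  rw [hsplit, integral_finsetSum _ fun k _ => (integrable_const _).indicator (hfiber k)]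
  simp_rw [integral_indicator_const _ (hfiber _)]

end DiscreteIntegral

lemma hasDerivAt_mul_log_primitive {x : ℝ} (hx : x ≠ 0) :
    HasDerivAt (fun t => t ^ 2 / 2 * log t - t ^ 2 / 4) (x * log x) x := by
  have h := (((hasDerivAt_pow 2 x).div_const 2).fun_mul (hasDerivAt_log hx)).fun_sub
    ((hasDerivAt_pow 2 x).div_const 4)
  refine h.congr_deriv ?_
  field_simp
  ring

lemma integral_from_one_mul_log {t : ℝ} (ht : 0 < t) :
    ∫ x in (1 : ℝ)..t, x * log x = t ^ 2 / 2 * log t - t ^ 2 / 4 + 1 / 4 := by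
  rw [intervalIntegral.integral_eq_sub_of_hasDerivAt (fun x hx => hasDerivAt_mul_log_primitive ?_)
    (continuous_mul_log.intervalIntegrable _ _)]
  · norm_num
  · rw [Set.mem_uIcc] at hx
    rcases hx with hx | hx <;> linarith

lemma mul_log_monotoneOn_Ici_one : MonotoneOn (fun x : ℝ => x * log x) (Set.Ici 1) :=
  mul_log_strictMonoOn.monotoneOn.mono <| Set.Ici_subset_Ici.2 <| exp_le_one_iff.2 (by norm_num)

lemma sum_range_mul_log_le (n : ℕ) :
    ∑ k ∈ range n, (k : ℝ) * log k ≤ n ^ 2 / 2 * log n - n ^ 2 / 4 + 1 / 4 := by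
  rcases n with _ | m
  · norm_num
  have h := (mul_log_monotoneOn_Ici_one.mono Set.Icc_subset_Ici_self).sum_le_integral
    (x₀ := 1) (a := m)
  rw [integral_from_one_mul_log (by positivity)] at h
  rw [sum_range_succ']
  push_cast
  simpa [add_comm] using h

lemma le_sum_range_mul_log {n : ℕ} (hn : n ≠ 0) :
    n ^ 2 / 2 * log n - n ^ 2 / 4 + 1 / 4 - n * log n ≤ ∑ k ∈ range n, (k : ℝ) * log k := by
  obtain ⟨m, rfl⟩ := Nat.exists_eq_succ_of_ne_zero hn
  have h := (mul_log_monotoneOn_Ici_one.mono Set.Icc_subset_Ici_self).integral_le_sum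
    (x₀ := 1) (a := m)
  rw [integral_from_one_mul_log (by positivity)] at h
  -- `h` bounds the integral by the sum shifted by one index; undoing the shift costs the top
  -- term `n log n`.
  have hshift := sum_range_succ' (fun i : ℕ => (1 + (i : ℝ)) * log (1 + i)) m
  rw [sum_range_succ] at hshift
  rw [sum_range_succ']
  push_cast at h hshift ⊢
  simp only [add_comm _ (1 : ℝ)] at *
  norm_num at hshift ⊢
  linarith

lemma integral_log_max_one_div_eq {Ω : Type*} [MeasurableSpace Ω] {μ : Measure Ω}
    [IsProbabilityMeasure μ] {X : Ω → ℕ} (hX : Measurable X) {n : ℕ} (hsupp : ∀ ω, X ω < n)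
    (hk : ∀ k, 0 < k → k < n → μ {ω | X ω = k} = 2 * k / (n : ℝ≥0∞) ^ 2) :
    ∫ ω, log ((max (X ω) 1 : ℝ) / n) ∂μ = 2 / n ^ 2 * ∑ k ∈ range n, (k : ℝ) * log k - log n := by
  have hn : (n : ℝ) ≠ 0 := by
    obtain ⟨ω⟩ := nonempty_of_isProbabilityMeasure μ
    exact Nat.cast_ne_zero.2 (Nat.ne_zero_of_lt (hsupp ω))
  have hmass : ∑ k ∈ range n, μ.real (X ⁻¹' {k}) = 1 := by
    rw [sum_measureReal_preimage_singleton _ fun k _ => hX (measurableSet_singleton k)]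
    have : X ⁻¹' ↑(range n) = Set.univ := Set.eq_univ_of_forall fun ω => by simpa using hsupp ω
    rw [this, probReal_univ]
  have hterm : ∀ k ∈ range n,
      μ.real (X ⁻¹' {k}) * log (max k 1 : ℝ) = 2 / n ^ 2 * (k * log k) := by
    intro k hkn
    rcases Nat.eq_zero_or_pos k with rfl | hpos
    · simp
    · rw [measureReal_def, show μ (X ⁻¹' {k}) = _ from hk k hpos (mem_range.1 hkn),
        max_eq_left (by exact_mod_cast hpos)]
      simp only [ENNReal.toReal_div, ENNReal.toReal_mul, ENNReal.toReal_pow,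
        ENNReal.toReal_natCast, ENNReal.toReal_ofNat]
      ring
  calc ∫ ω, log ((max (X ω) 1 : ℝ) / n) ∂μ
      = ∑ k ∈ range n, μ.real (X ⁻¹' {k}) * (log (max k 1 : ℝ) - log n) := by
        rw [integral_comp_eq_sum_of_mem_finset hX (fun ω => mem_range.2 (hsupp ω))
          (fun k : ℕ => log ((max k 1 : ℝ) / n))]
        refine sum_congr rfl fun k _ => ?_
        rw [smul_eq_mul, log_div (by positivity) hn]
    _ = 2 / n ^ 2 * ∑ k ∈ range n, (k : ℝ) * log k - log n := by
        simp_rw [mul_sub, sum_sub_distrib, ← sum_mul, hmass, sum_congr rfl hterm, ← mul_sum]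
        ring

lemma tendsto_two_div_sq_mul_sum_range_mul_log_sub_log :
    Tendsto (fun n : ℕ => 2 / (n : ℝ) ^ 2 * ∑ k ∈ range n, (k : ℝ) * log k - log n) atTop
      (𝓝 (-(1 / 2))) := by
  have hlog : Tendsto (fun n : ℕ => log n / n) atTop (𝓝 0) := by
    simpa [Function.comp_def] using
      (tendsto_pow_log_div_mul_add_atTop 1 0 1 one_ne_zero).comp tendsto_natCast_atTop_atTop
  have hsq : Tendsto (fun n : ℕ => ((n : ℝ) ^ 2)⁻¹) atTop (𝓝 0) :=
    tendsto_inv_atTop_zero.comp ((tendsto_pow_atTop two_ne_zero).comp tendsto_natCast_atTop_atTop)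
  have hupper : Tendsto (fun n : ℕ => -(1 / 2) + ((n : ℝ) ^ 2)⁻¹ / 2) atTop (𝓝 (-(1 / 2))) := by
    simpa only [zero_div, add_zero] using (hsq.div_const 2).const_add (-(1 / 2))
  have hlower : Tendsto (fun n : ℕ => -(1 / 2) + ((n : ℝ) ^ 2)⁻¹ / 2 - 2 * (log n / n)) atTop
      (𝓝 (-(1 / 2))) := by
    simpa only [mul_zero, sub_zero] using hupper.sub (hlog.const_mul 2)
  refine tendsto_of_tendsto_of_tendsto_of_le_of_le' hlower hupper ?_ ?_
  · filter_upwards [eventually_ne_atTop 0] with n hn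
    have hn' : (n : ℝ) ≠ 0 := Nat.cast_ne_zero.2 hn
    have h := mul_le_mul_of_nonneg_left (le_sum_range_mul_log hn)
      (by positivity : (0 : ℝ) ≤ 2 / (n : ℝ) ^ 2)
    have e : 2 / (n : ℝ) ^ 2 * (n ^ 2 / 2 * log n - n ^ 2 / 4 + 1 / 4 - n * log n) - log n
        = -(1 / 2) + ((n : ℝ) ^ 2)⁻¹ / 2 - 2 * (log n / n) := by
      field_simp
      ring
    linarith
  · filter_upwards [eventually_ne_atTop 0] with n hn
    have hn' : (n : ℝ) ≠ 0 := Nat.cast_ne_zero.2 hn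
    have h := mul_le_mul_of_nonneg_left (sum_range_mul_log_le n)
      (by positivity : (0 : ℝ) ≤ 2 / (n : ℝ) ^ 2)
    have e : 2 / (n : ℝ) ^ 2 * (n ^ 2 / 2 * log n - n ^ 2 / 4 + 1 / 4) - log n
        = -(1 / 2) + ((n : ℝ) ^ 2)⁻¹ / 2 := by
      field_simp
      ring
    linarith

theorem stmt17_general {Ω : Type*} [MeasureSpace Ω] [IsProbabilityMeasure (ℙ : Measure Ω)]
    (I : ℕ → Ω → ℕ) (hmeas : ∀ n, Measurable (I n))
    (hk : ∀ n, 2 ≤ n → ∀ k, 1 ≤ k → k ≤ n - 1 →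
      ℙ {ω | I n ω = k} = 2 * k / (n : ℝ≥0∞) ^ 2)
    (hsupp : ∀ n ω, 2 ≤ n → I n ω ≤ n - 1) :
    Tendsto (fun n => ∫ ω, Real.log ((max (I n ω) 1 : ℝ) / n)) atTop
      (nhds (-(1 / 2))) := by
  refine tendsto_two_div_sq_mul_sum_range_mul_log_sub_log.congr' ?_
  filter_upwards [eventually_ge_atTop 2] with n hn
  refine (integral_log_max_one_div_eq (hmeas n) (fun ω => ?_)
    (fun k hk₀ hkn => hk n hn k hk₀ (by omega))).symm
  have := hsupp n ω hn
  omega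

theorem stmt17 {Ω : Type*} [MeasureSpace Ω] [IsProbabilityMeasure (ℙ : Measure Ω)]
    (I : ℕ → Ω → ℕ) (hmeas : ∀ n, Measurable (I n))
    (h0 : ∀ n, 2 ≤ n → ℙ {ω | I n ω = 0} = (n : ℝ≥0∞)⁻¹)
    (hk : ∀ n, 2 ≤ n → ∀ k, 1 ≤ k → k ≤ n - 1 →
      ℙ {ω | I n ω = k} = 2 * k / (n : ℝ≥0∞) ^ 2)
    (hsupp : ∀ n ω, 2 ≤ n → I n ω ≤ n - 1) :
    Tendsto (fun n => ∫ ω, Real.log ((max (I n ω) 1 : ℝ) / n)) atTop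
      (nhds (-(1 / 2))) :=
  stmt17_general I hmeas hk hsupp
end
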